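/- arXiv:2005.00089 — 3 statements merged into one kernel-verified Lean document; each statement's English description precedes it below -/
import Mathlib

section
/- A simple binary matroid M = (E, G) is AI₄-free if and only if its complement M^c = (G \ E, G) is AI₄-free. -/
/-- `M = (E, G)` (with `G` the nonzero vectors of a `GF(2)` space) is `AI₄`-free if for every
linearly independent `{x₁,x₂,x₃,x₄} ⊆ E` some triple sum `Σ_{j ≠ i} x_j` lies in `E`. -/
def AI4Free {V : Type*} [AddCommGroup V] [Module (ZMod 2) V] (E : Set V) : Prop :=
  ∀ x : Fin 4 → V, (∀ i, x i ∈ E) → LinearIndependent (ZMod 2) x →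
    ∃ i, (∑ j ∈ Finset.univ.erase i, x j) ∈ E

section Aux

variable {V : Type*} [AddCommGroup V] [Module (ZMod 2) V]

lemma add_self_zero' (v : V) : v + v = 0 := by
  have h : (2 : ZMod 2) • v = 0 := by
    rw [show (2 : ZMod 2) = 0 by decide, zero_smul]
  rwa [two_smul] at h

lemma erase_sum_eq (x : Fin 4 → V) (i : Fin 4) :
    (∑ j ∈ Finset.univ.erase i, x j) = x i + ∑ j, x j := by
  rw [← Finset.add_sum_erase Finset.univ x (Finset.mem_univ i), ← add_assoc,
    add_self_zero' (x i), zero_add]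

lemma erase_sum_involutive (x : Fin 4 → V) (i : Fin 4) :
    (∑ j ∈ Finset.univ.erase i, (fun k => ∑ l ∈ Finset.univ.erase k, x l) j) = x i := by
  simp only [erase_sum_eq]
  have h4 : (Finset.univ : Finset (Fin 4)).card • (∑ l, x l) = 0 := by
    rw [show (Finset.univ : Finset (Fin 4)).card = 2 + 2 by simp,
      add_nsmul, two_nsmul, add_self_zero']
  rw [Finset.sum_add_distrib, Finset.sum_const, h4, add_zero, add_assoc,
    add_self_zero', add_zero]

lemma li_erase_sum (x : Fin 4 → V) (hx : LinearIndependent (ZMod 2) x) :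
    LinearIndependent (ZMod 2) (fun i => ∑ j ∈ Finset.univ.erase i, x j) := by
  rw [Fintype.linearIndependent_iff] at hx ⊢
  intro g hg
  set c : ZMod 2 := ∑ i, g i with hc
  have key : ∑ i, (g i + c) • x i = 0 := by
    rw [← hg]
    simp only [erase_sum_eq, smul_add, add_smul, Finset.sum_add_distrib]
    congr 1
    rw [← Finset.sum_smul, ← hc, Finset.smul_sum]
  have hgi : ∀ i, g i + c = 0 := hx _ key
  have hgc : ∀ i, g i = c := by
    intro i
    have := hgi i
    have hcc : c + c = 0 := CharTwo.add_self_eq_zero c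
    linear_combination this - hcc
  have hc0 : c = 0 := by
    have h4 : g 0 + g 1 + g 2 + g 3 = c := (Fin.sum_univ_four g).symm.trans hc.symm
    rw [hgc 0, hgc 1, hgc 2, hgc 3] at h4
    have hcc : c + c = 0 := CharTwo.add_self_eq_zero c
    rw [hcc, zero_add, hcc] at h4
    exact h4.symm
  intro i
  rw [hgc i, hc0]

lemma oneDir (E : Set V) (h : AI4Free E) : AI4Free ({v : V | v ≠ 0} \ E) := by
  intro x hx hxli
  by_contra hcon
  push_neg at hcon
  set s : Fin 4 → V := fun i => ∑ j ∈ Finset.univ.erase i, x j with hs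
  have hsli : LinearIndependent (ZMod 2) s := li_erase_sum x hxli
  have hsne : ∀ i, s i ≠ 0 := fun i => hsli.ne_zero i
  have hsE : ∀ i, s i ∈ E := by
    intro i
    by_contra hne
    exact hcon i ⟨hsne i, hne⟩
  obtain ⟨i, hi⟩ := h s hsE hsli
  have : (∑ j ∈ Finset.univ.erase i, s j) = x i := erase_sum_involutive x i
  rw [this] at hi
  exact (hx i).2 hi

end Aux

/-- `M` is `AI₄`-free iff its complement `M^c = (G \ E, G)` is `AI₄`-free. -/
theorem stmt2 {V : Type*} [AddCommGroup V] [Module (ZMod 2) V]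
    [FiniteDimensional (ZMod 2) V] (E : Set V) (hE : E ⊆ {v : V | v ≠ 0}) :
    AI4Free E ↔ AI4Free ({v : V | v ≠ 0} \ E) := by
  constructor
  · exact oneDir E
  · intro h
    have := oneDir _ h
    rwa [Set.diff_diff_cancel_left hE] at this
end

section
/- Let M = (E, G) be an AI₄-free simple binary matroid of dimension at least 5, and let H be a hyperplane of G with |E \ H| ≤ 1. Then G has a hyperplane H' such that E ⊆ H', or E ∩ H' = ∅, or H' ⊆ E. -/
open Submodule Module

section Aux
variable {V : Type*} [AddCommGroup V] [Module (ZMod 2) V]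

lemma char2_add_self (x : V) : x + x = 0 := by
  have h : (2 : ZMod 2) • x = 0 := by
    rw [show (2 : ZMod 2) = 0 by decide, zero_smul]
  simpa [two_smul] using h

lemma char2_two_nsmul (x : V) : (2 : ℕ) • x = 0 := by
  rw [two_smul]; exact char2_add_self x

lemma char2_two_zsmul (x : V) : (2 : ℤ) • x = 0 := by
  rw [two_smul]; exact char2_add_self x

lemma char2_eq_iff (x y : V) : x = y ↔ x + y = 0 := by
  constructor
  · rintro rfl; exact char2_add_self x
  · intro h
    have h2 := congrArg (· + y) h
    simpa [add_assoc, char2_add_self] using h2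

lemma zmod2_cases : ∀ z : ZMod 2, z = 0 ∨ z = 1 := by decide

lemma span_rep {bs : Finset V} {v : V} (hv : v ∈ Submodule.span (ZMod 2) (bs : Set V)) :
    ∃ t ⊆ bs, v = ∑ x ∈ t, x := by
  classical
  rw [mem_span_finset] at hv
  obtain ⟨f, hf⟩ := hv
  refine ⟨bs.filter (fun i => f i = 1), Finset.filter_subset _ _, ?_⟩
  rw [← hf.2, Finset.sum_filter]
  exact (Finset.sum_congr rfl (fun i _ => by
    rcases zmod2_cases (f i) with h | h <;> simp [h])).symm

lemma sum_ne_zero' {bset : Set V} [Fintype bset]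
    (hli : LinearIndependent (ZMod 2) (Subtype.val : bset → V))
    {t : Finset V} (hts : ↑t ⊆ bset) (htne : t.Nonempty) : ∑ x ∈ t, x ≠ 0 := by
  classical
  intro h0
  have key := (Fintype.linearIndependent_iff.mp hli) (fun i => if (i : V) ∈ t then 1 else 0) ?_
  · obtain ⟨a, ha⟩ := htne
    have h2 := key ⟨a, hts ha⟩
    simp [ha] at h2
  · have h4 : (∑ i : bset, (if (i : V) ∈ t then (1 : ZMod 2) else 0) • (i : V))
        = ∑ i ∈ bset.toFinset, (if i ∈ t then (1 : ZMod 2) else 0) • i :=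
      (Finset.sum_set_coe (f := fun i => (if i ∈ t then (1 : ZMod 2) else 0) • i) bset).symm ▸ rfl
    rw [h4]
    have h5 : ∀ x ∈ bset.toFinset, (if x ∈ t then (1:ZMod 2) else 0) • x
        = if x ∈ t then x else 0 := by
      intro x _; split <;> simp
    rw [Finset.sum_congr rfl h5, Finset.sum_ite_mem]
    have h6 : bset.toFinset ∩ t = t := by
      ext x; simp only [Finset.mem_inter, Set.mem_toFinset]
      exact ⟨fun h => h.2, fun h => ⟨hts h, h⟩⟩
    rw [h6, h0]

lemma ker_hyp [FiniteDimensional (ZMod 2) V] (f : V →ₗ[ZMod 2] ZMod 2) (v : V) (hv : f v = 1) :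
    Module.finrank (ZMod 2) V = Module.finrank (ZMod 2) (LinearMap.ker f) + 1 := by
  have hr := LinearMap.finrank_range_add_finrank_ker f
  have htop : LinearMap.range f = ⊤ := by
    rw [LinearMap.range_eq_top]
    intro z
    exact ⟨z • v, by simp [hv]⟩
  rw [htop] at hr
  simp only [finrank_top, Module.finrank_self] at hr
  omega

end Aux

/-- let `M = (E, G)` be an `AI₄`-free matroid of dimension at least 5 and `H` a
hyperplane with `|E \ H| ≤ 1`.  Then there is a hyperplane `H'` with `E ⊆ H'`, or
`E ∩ H' = ∅`, or `H' ⊆ E` (as a set of nonzero vectors). -/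
theorem stmt16 {V : Type*} [AddCommGroup V] [Module (ZMod 2) V]
    [FiniteDimensional (ZMod 2) V]
    (hdim : 5 ≤ Module.finrank (ZMod 2) V)
    (E : Set V) (hE : E ⊆ {v : V | v ≠ 0}) (hAI4 : AI4Free E)
    (H : Submodule (ZMod 2) V)
    (hH : Module.finrank (ZMod 2) V = Module.finrank (ZMod 2) H + 1)
    (hEH : Nat.card ↥(E \ (H : Set V)) ≤ 1) :
    ∃ H' : Submodule (ZMod 2) V,
      Module.finrank (ZMod 2) V = Module.finrank (ZMod 2) H' + 1 ∧
      (E ⊆ (H' : Set V) ∨ E ∩ (H' : Set V) = ∅ ∨ ((H' : Set V) \ {0}) ⊆ E) := by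
  classical
  have hVfin : Finite V := Module.finite_of_finite (ZMod 2)
  by_cases hspan : Submodule.span (ZMod 2) E = ⊤
  swap
  · -- `E` is contained in a hyperplane
    have hlt : Submodule.span (ZMod 2) E < ⊤ := lt_top_iff_ne_top.mpr hspan
    obtain ⟨f, hf0, hmap⟩ := Submodule.exists_dual_map_eq_bot_of_lt_top hlt inferInstance
    have hker : Submodule.span (ZMod 2) E ≤ LinearMap.ker f := by
      intro x hx
      have hx2 : f x ∈ Submodule.map f (Submodule.span (ZMod 2) E) := ⟨x, hx, rfl⟩
      rw [hmap] at hx2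
      exact LinearMap.mem_ker.mpr ((Submodule.mem_bot (ZMod 2)).mp hx2)
    obtain ⟨v, hv⟩ : ∃ v, f v ≠ 0 := by
      by_contra h; push_neg at h; exact hf0 (LinearMap.ext fun x => h x)
    have hv1 : f v = 1 := (zmod2_cases (f v)).resolve_left hv
    exact ⟨LinearMap.ker f, ker_hyp f v hv1,
      Or.inl (fun x hx => hker (Submodule.subset_span hx))⟩
  -- main case : `E` spans
  have hEnotH : ¬ E ⊆ (H : Set V) := by
    intro hsub
    have h1 : Submodule.span (ZMod 2) E ≤ H := Submodule.span_le.mpr hsub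
    rw [hspan] at h1
    have h2 : H = ⊤ := top_le_iff.mp h1
    rw [h2] at hH
    simp only [finrank_top] at hH
    omega
  obtain ⟨e, heE, heH⟩ := Set.not_subset.mp hEnotH
  have he0 : e ≠ 0 := hE heE
  have hEH1 : E \ (H : Set V) = {e} := by
    haveI : Finite ↥(E \ (H : Set V)) := Subtype.finite
    have hss : Subsingleton ↥(E \ (H : Set V)) :=
      Finite.card_le_one_iff_subsingleton.mp hEH
    refine Set.eq_singleton_iff_unique_mem.mpr ⟨⟨heE, heH⟩, ?_⟩
    intro x hx
    have := hss.elim ⟨x, hx⟩ ⟨e, ⟨heE, heH⟩⟩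
    exact Subtype.ext_iff.mp this
  set S : Set V := E ∩ (H : Set V) with hSdef
  have hSsubE : S ⊆ E := Set.inter_subset_left
  have hSsubH : S ⊆ (H : Set V) := Set.inter_subset_right
  have hEsub : E ⊆ S ∪ {e} := by
    intro x hx
    by_cases hxH : x ∈ H
    · exact Or.inl ⟨hx, hxH⟩
    · right
      have : x ∈ E \ (H : Set V) := ⟨hx, hxH⟩
      rw [hEH1] at this
      exact this
  -- key auxiliary fact about sums escaping `H`
  have haux : ∀ u v : V, u ∈ H → v ∈ H → u + v + e ∈ E → u = v := by
    intro u v hu hv huv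
    have h1 : u + v + e ∉ (H : Set V) := by
      intro hmem
      apply heH
      have h2 : e = (u + v + e) + (u + v) := by
        abel_nf
        simp [char2_two_nsmul, char2_two_zsmul]
      rw [h2]
      exact H.add_mem hmem (H.add_mem hu hv)
    have h3 : u + v + e ∈ E \ (H : Set V) := ⟨huv, h1⟩
    rw [hEH1] at h3
    have h4 : u + v = 0 := by
      have h5 : u + v + e = e := h3
      have := congrArg (· + e) h5
      simpa [add_assoc, char2_add_self] using this
    exact (char2_eq_iff u v).mpr h4
  -- closure of `S` under triple sums
  have hclose : ∀ a b c : V, a ∈ S → b ∈ S → c ∈ S → a ≠ b → a ≠ c → b ≠ c →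
      a + b + c ≠ 0 → a + b + c ∈ S := by
    intro a b c ha hb hc hab hac hbc habc
    have haH := ha.2; have hbH := hb.2; have hcH := hc.2
    have ha0 : a ≠ 0 := hE ha.1
    have hb0 : b ≠ 0 := hE hb.1
    have hc0 : c ≠ 0 := hE hc.1
    set x : Fin 4 → V := ![a, b, c, e] with hx
    have hxE : ∀ i, x i ∈ E := by
      intro i; fin_cases i
      · exact ha.1
      · exact hb.1
      · exact hc.1
      · exact heE
    have hli : LinearIndependent (ZMod 2) x := by
      rw [Fintype.linearIndependent_iff]
      intro g hg
      rw [Fin.sum_univ_four] at hg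
      simp only [hx, Matrix.cons_val_zero, Matrix.cons_val_one, Matrix.head_cons,
        Matrix.cons_val_two, Matrix.tail_cons, Matrix.cons_val_three] at hg
      have hg3 : g 3 = 0 := by
        rcases zmod2_cases (g 3) with h | h
        · exact h
        exfalso
        apply heH
        have h6 : e = g 0 • a + g 1 • b + g 2 • c := by
          rw [h, one_smul] at hg
          have := congrArg (· + e) hg
          simpa [add_assoc, char2_add_self] using this.symm
        rw [h6]
        exact H.add_mem (H.add_mem (H.smul_mem _ haH) (H.smul_mem _ hbH)) (H.smul_mem _ hcH)
      rw [hg3, zero_smul, add_zero] at hg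
      have hg012 : g 0 = 0 ∧ g 1 = 0 ∧ g 2 = 0 := by
        rcases zmod2_cases (g 0) with h0 | h0 <;> rcases zmod2_cases (g 1) with h1 | h1 <;>
          rcases zmod2_cases (g 2) with h2 | h2 <;>
          simp only [h0, h1, h2, zero_smul, one_smul, add_zero, zero_add] at hg
        · exact ⟨h0, h1, h2⟩
        · exact absurd hg hc0
        · exact absurd hg hb0
        · exact absurd ((char2_eq_iff b c).mpr hg) hbc
        · exact absurd hg ha0
        · exact absurd ((char2_eq_iff a c).mpr hg) hac
        · exact absurd ((char2_eq_iff a b).mpr hg) hab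
        · exact absurd hg habc
      intro i; fin_cases i
      · exact hg012.1
      · exact hg012.2.1
      · exact hg012.2.2
      · exact hg3
    obtain ⟨i, hi⟩ := hAI4 x hxE hli
    have herase : ∀ i : Fin 4, (∑ j ∈ Finset.univ.erase i, x j) = a + b + c + e - x i := by
      intro i
      rw [Finset.sum_erase_eq_sub (Finset.mem_univ i), Fin.sum_univ_four]
      simp [hx]
    rw [herase] at hi
    fin_cases i
    · exfalso
      have hi' : a + b + c + e - a ∈ E := hi
      have h7 : a + b + c + e - a = b + c + e := by abel
      rw [h7] at hi'
      exact hbc (haux b c hbH hcH hi')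
    · exfalso
      have hi' : a + b + c + e - b ∈ E := hi
      have h7 : a + b + c + e - b = a + c + e := by abel
      rw [h7] at hi'
      exact hac (haux a c haH hcH hi')
    · exfalso
      have hi' : a + b + c + e - c ∈ E := hi
      have h7 : a + b + c + e - c = a + b + e := by abel
      rw [h7] at hi'
      exact hab (haux a b haH hbH hi')
    · have hi' : a + b + c + e - e ∈ E := hi
      have h7 : a + b + c + e - e = a + b + c := by abel
      rw [h7] at hi'
      exact ⟨hi', H.add_mem (H.add_mem haH hbH) hcH⟩
  -- `S` spans `H`
  have hspanS : Submodule.span (ZMod 2) S = H := by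
    have hle : Submodule.span (ZMod 2) S ≤ H := Submodule.span_le.mpr hSsubH
    apply Submodule.eq_of_le_of_finrank_le hle
    have h1 : Submodule.span (ZMod 2) S ⊔ Submodule.span (ZMod 2) {e} = ⊤ := by
      rw [← Submodule.span_union]
      apply top_le_iff.mp
      rw [← hspan]
      apply Submodule.span_mono
      intro x hx
      rcases hEsub hx with h | h
      · exact Or.inl h
      · exact Or.inr h
    have h2 := Submodule.finrank_sup_add_finrank_inf_eq
      (Submodule.span (ZMod 2) S) (Submodule.span (ZMod 2) {e})
    rw [h1] at h2
    have h3 : Module.finrank (ZMod 2) (Submodule.span (ZMod 2) {e}) = 1 :=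
      finrank_span_singleton he0
    rw [h3, finrank_top] at h2
    omega
  -- pick an independent subset of `S` spanning `H`
  obtain ⟨bset, hbsub, hbspan, hbli⟩ := exists_linearIndependent (ZMod 2) S
  rw [hspanS] at hbspan
  have hbfin : bset.Finite := hbli.setFinite
  haveI : Fintype bset := hbfin.fintype
  have hcoe : (bset.toFinset : Set V) = bset := Set.coe_toFinset bset
  have hcard : bset.toFinset.card = Module.finrank (ZMod 2) H := by
    have := finrank_span_set_eq_card (s := bset) hbli
    rw [hbspan] at this
    omega
  have hsum_ne : ∀ t : Finset V, ↑t ⊆ bset → t.Nonempty → ∑ x ∈ t, x ≠ 0 :=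
    fun t h1 h2 => sum_ne_zero' hbli h1 h2
  have hb_in_S : ∀ x ∈ bset, x ∈ S := fun x hx => hbsub hx
  -- Lemma A : sums of oddly many basis elements are in `S`
  have lemA : ∀ m : ℕ, ∀ t : Finset V, ↑t ⊆ bset → t.card = 2 * m + 1 →
      (∑ x ∈ t, x) ∈ S := by
    intro m
    induction m with
    | zero =>
      intro t ht hcard1
      obtain ⟨a, rfl⟩ := Finset.card_eq_one.mp hcard1
      rw [Finset.sum_singleton]
      exact hb_in_S a (ht (Finset.mem_singleton_self a))
    | succ k ih =>
      intro t ht hcardt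
      obtain ⟨l, hl⟩ : t.Nonempty := Finset.card_pos.mp (by omega)
      have hcard2 : (t.erase l).Nonempty := by
        apply Finset.card_pos.mp
        rw [Finset.card_erase_of_mem hl]
        omega
      obtain ⟨mm, hmm⟩ := hcard2
      set t' := (t.erase l).erase mm with ht'
      have hml : mm ≠ l := (Finset.mem_erase.mp hmm).1
      have hmt : mm ∈ t := (Finset.mem_erase.mp hmm).2
      have hsub' : ↑t' ⊆ bset := by
        intro z hz
        exact ht (Finset.mem_of_mem_erase (Finset.mem_of_mem_erase hz))
      have hcard' : t'.card = 2 * k + 1 := by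
        rw [ht', Finset.card_erase_of_mem hmm, Finset.card_erase_of_mem hl]
        omega
      have hs1 : (∑ x ∈ t', x) ∈ S := ih t' hsub' hcard'
      have hsplit1 : (∑ x ∈ t', x) + mm = ∑ x ∈ t.erase l, x :=
        Finset.sum_erase_add (t.erase l) id hmm
      have hsplit2 : (∑ x ∈ t.erase l, x) + l = ∑ x ∈ t, x :=
        Finset.sum_erase_add t id hl
      have hlmem : l ∉ t' := fun h => (Finset.mem_erase.mp (Finset.mem_of_mem_erase h)).1 rfl
        -- careful
      have hS_mm : mm ∈ S := hb_in_S mm (ht hmt)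
      have hS_l : l ∈ S := hb_in_S l (ht hl)
      have hne1 : (∑ x ∈ t', x) ≠ mm := by
        intro h
        apply hsum_ne (t.erase l) (fun z hz => ht (Finset.mem_of_mem_erase hz)) ⟨mm, hmm⟩
        rw [← hsplit1, h, char2_add_self]
      have hne2 : (∑ x ∈ t', x) ≠ l := by
        intro h
        apply hsum_ne (insert l t') (by
          intro z hz
          rcases Finset.mem_insert.mp hz with rfl | hz'
          · exact ht hl
          · exact hsub' hz') ⟨l, Finset.mem_insert_self _ _⟩
        rw [Finset.sum_insert hlmem, add_comm, h, char2_add_self]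
      have hne3 : (∑ x ∈ t, x) ≠ 0 := hsum_ne t ht ⟨l, hl⟩
      have hfinal : (∑ x ∈ t', x) + mm + l = ∑ x ∈ t, x := by rw [hsplit1, hsplit2]
      have hmem := hclose (∑ x ∈ t', x) mm l hs1 hS_mm hS_l hne1 hne2 hml (by
        rw [hfinal]; exact hne3)
      rwa [hfinal] at hmem
  -- extend `bset ∪ {e}` to a basis and define the parity functional `f`
  have heSpan : e ∉ Submodule.span (ZMod 2) bset := by rw [hbspan]; exact heH
  have hinsli : LinearIndepOn (ZMod 2) id (insert e bset) :=
    LinearIndepOn.id_insert hbli heSpan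
  set f : V →ₗ[ZMod 2] ZMod 2 :=
    (Module.Basis.extend hinsli).constr (ZMod 2) (fun _ => (1 : ZMod 2)) with hfdef
  have hfT : ∀ x (hx : x ∈ LinearIndepOn.extend hinsli (Set.subset_univ _)), f x = 1 := by
    intro x hx
    have h1 : f ((Module.Basis.extend hinsli) ⟨x, hx⟩) = 1 :=
      (Module.Basis.extend hinsli).constr_basis (ZMod 2) _ _
    rwa [Module.Basis.extend_apply_self] at h1
  have hsubT : insert e bset ⊆ LinearIndepOn.extend hinsli (Set.subset_univ _) :=
    LinearIndepOn.subset_extend hinsli _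
  have hfe : f e = 1 := hfT e (hsubT (Set.mem_insert _ _))
  have hfb : ∀ x ∈ bset, f x = 1 := fun x hx => hfT x (hsubT (Set.mem_insert_of_mem _ hx))
  have hfsum : ∀ t : Finset V, ↑t ⊆ bset → f (∑ x ∈ t, x) = (t.card : ZMod 2) := by
    intro t ht
    rw [map_sum, Finset.sum_congr rfl (fun x hx => hfb x (ht hx))]
    simp
  have lemA' : ∀ v : V, v ∈ H → f v = 1 → v ∈ S := by
    intro v hvH hfv
    have hv' : v ∈ Submodule.span (ZMod 2) ((bset.toFinset : Finset V) : Set V) := by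
      rw [hcoe, hbspan]; exact hvH
    obtain ⟨t, ht, rfl⟩ := span_rep hv'
    have ht' : ↑t ⊆ bset := by
      intro z hz
      have := ht hz
      rwa [Set.mem_toFinset] at this
    rw [hfsum t ht'] at hfv
    obtain ⟨m, hm⟩ : ∃ m, t.card = 2 * m + 1 := by
      rcases Nat.even_or_odd t.card with he' | ho
      · exfalso
        obtain ⟨k, hk⟩ := he'
        rw [hk] at hfv
        have hzero : ((k + k : ℕ) : ZMod 2) = 0 := by
          push_cast
          rw [← two_mul, show ((2 : ZMod 2)) = 0 from by decide, zero_mul]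
        rw [hzero] at hfv
        exact one_ne_zero hfv.symm
      · obtain ⟨k, hk⟩ := ho; exact ⟨k, by omega⟩
    exact lemA m t ht' hm
  by_cases hall : ∀ s ∈ S, f s = 1
  · -- `E` is disjoint from the hyperplane `ker f`
    refine ⟨LinearMap.ker f, ker_hyp f e hfe, Or.inr (Or.inl ?_)⟩
    rw [Set.eq_empty_iff_forall_notMem]
    rintro z ⟨hzE, hzk⟩
    have hz0 : f z = 0 := LinearMap.mem_ker.mp hzk
    rcases hEsub hzE with hzS | hze
    · rw [hall z hzS] at hz0; exact one_ne_zero hz0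
    · rw [Set.mem_singleton_iff] at hze
      rw [hze, hfe] at hz0
      exact one_ne_zero hz0
  · -- `H` itself works : every nonzero vector of `H` lies in `E`
    push_neg at hall
    obtain ⟨s0, hs0S, hfs0'⟩ := hall
    have hfs0 : f s0 = 0 := (zmod2_cases (f s0)).resolve_right hfs0'
    refine ⟨H, hH, Or.inr (Or.inr ?_)⟩
    rintro v ⟨hvH', hv0'⟩
    have hvH : v ∈ H := hvH'
    have hv0 : v ≠ 0 := fun h => hv0' (by rw [h]; rfl)
    rcases zmod2_cases (f v) with hfv | hfv
    swap
    · exact hSsubE (lemA' v hvH hfv)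
    by_cases hvs0 : v = s0
    · rw [hvs0]; exact hSsubE hs0S
    have hcard2 : 1 < bset.toFinset.card := by omega
    obtain ⟨x₁, hx₁, x₂, hx₂, hx12⟩ := Finset.one_lt_card.mp hcard2
    obtain ⟨x, hxb, hxne⟩ : ∃ x ∈ bset.toFinset, x ≠ s0 + v := by
      by_cases h : x₁ = s0 + v
      · exact ⟨x₂, hx₂, fun hh => hx12 (by rw [h, ← hh])⟩
      · exact ⟨x₁, hx₁, h⟩
    have hxbset : x ∈ bset := by rwa [Set.mem_toFinset] at hxb
    have hxS : x ∈ S := hb_in_S x hxbset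
    have hxH : x ∈ H := hSsubH hxS
    have hfx : f x = 1 := hfb x hxbset
    have hs0H : s0 ∈ H := hSsubH hs0S
    have hyH : s0 + v + x ∈ H := H.add_mem (H.add_mem hs0H hvH) hxH
    have hfy : f (s0 + v + x) = 1 := by
      rw [map_add, map_add, hfs0, hfv, hfx]; norm_num
    have hyS : s0 + v + x ∈ S := lemA' _ hyH hfy
    have hy0 : s0 + v + x ≠ 0 := fun h => by
      rw [h, map_zero] at hfy; exact one_ne_zero hfy.symm
    have hne1 : s0 ≠ x := fun h => by
      rw [h, hfx] at hfs0; exact (one_ne_zero : (1 : ZMod 2) ≠ 0) hfs0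
    have hne2 : s0 ≠ s0 + v + x := by
      intro h
      rw [add_assoc] at h
      have h8 : v + x = 0 := left_eq_add.mp h
      have h9 : v = x := (char2_eq_iff v x).mpr h8
      rw [h9, hfx] at hfv
      exact (one_ne_zero : (1 : ZMod 2) ≠ 0) hfv
    have hne3 : x ≠ s0 + v + x := by
      intro h
      have h8 : s0 + v = 0 := right_eq_add.mp h
      exact hvs0 ((char2_eq_iff v s0).mpr (by rwa [add_comm] at h8))
    have hveq : s0 + x + (s0 + v + x) = v := by
      abel_nf
      simp [char2_two_nsmul, char2_two_zsmul]
    have hmem := hclose s0 x (s0 + v + x) hs0S hxS hyS hne1 hne2 hne3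
      (by rw [hveq]; exact hv0)
    rw [hveq] at hmem
    exact hSsubE hmem
end

section
/- Let M = (E, G) be a simple binary matroid and let β₁(M) = (E', G') where G is a hyperplane of G', w ∈ G' \ G, and E' = G ∪ (w + E) ∪ {w}. Then β₁(M) is I₃-free. -/
/-- `E ∩ (W \ {0})` is a basis of the subspace `W` (independent and spanning `W`). -/
def MeetsInBasis {V : Type*} [AddCommGroup V] [Module (ZMod 2) V]
    (E : Set V) (W : Submodule (ZMod 2) V) : Prop :=
  LinearIndependent (ZMod 2) ((↑) : ↥(E ∩ ((W : Set V) \ {0})) → V) ∧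
    Submodule.span (ZMod 2) (E ∩ ((W : Set V) \ {0})) = W

/-- let `M = (E, G)` be a simple binary matroid with `G = G₀ \ {0}` a hyperplane
of `G' = V \ {0}`, `w ∈ G' \ G`, and let `β₁(M)` have ground set
`E' = G ∪ (w + E) ∪ {w}`.  Then `β₁(M)` is `I₃`-free: no 3-dimensional subspace meets `E'`
in a basis of itself. -/
theorem stmt18 {V : Type*} [AddCommGroup V] [Module (ZMod 2) V]
    [FiniteDimensional (ZMod 2) V]
    (G₀ : Submodule (ZMod 2) V)
    (hG₀ : Module.finrank (ZMod 2) V = Module.finrank (ZMod 2) G₀ + 1)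
    (E : Set V) (hE : E ⊆ (G₀ : Set V) \ {0})
    (w : V) (hw : w ∉ G₀) :
    ∀ W : Submodule (ZMod 2) V, Module.finrank (ZMod 2) W = 3 →
      ¬ MeetsInBasis (((G₀ : Set V) \ {0}) ∪ (fun e => w + e) '' E ∪ {w}) W := by
  intro W hW h
  obtain ⟨hli, _⟩ := h
  -- `W ⊓ G₀` has dimension at least 2
  have hle : 2 ≤ Module.finrank (ZMod 2) ↥(W ⊓ G₀) := by
    have h1 := Submodule.finrank_sup_add_finrank_inf_eq W G₀
    have h2 : Module.finrank (ZMod 2) ↥(W ⊔ G₀) ≤ Module.finrank (ZMod 2) V :=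
      Submodule.finrank_le _
    omega
  obtain ⟨f, hf⟩ := exists_linearIndependent_of_le_finrank hle
  have hfi : LinearIndependent (ZMod 2) fun i => ((f i : V)) :=
    hf.map' (W ⊓ G₀).subtype (Submodule.ker_subtype _)
  set x : V := (f 0 : V) with hxdef
  set y : V := (f 1 : V) with hydef
  have hx0 : x ≠ 0 := hfi.ne_zero 0
  have hy0 : y ≠ 0 := hfi.ne_zero 1
  have hxy : x ≠ y := hfi.injective.ne (by decide : (0 : Fin 2) ≠ 1)
  have hyy : y + y = 0 := by
    have : (2 : ZMod 2) • y = 0 := by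
      rw [show (2 : ZMod 2) = 0 from rfl, zero_smul]
    simpa [two_smul] using this
  have hxy0 : x + y ≠ 0 := by
    intro hc
    apply hxy
    have : x + (y + y) = 0 + y := by rw [← add_assoc, hc]
    simpa [hyy] using this
  -- x, y, x+y all lie in the ground-set intersection
  have hmemU : ∀ z : V, z ∈ W ⊓ G₀ → z ≠ 0 →
      z ∈ ((((G₀ : Set V) \ {0}) ∪ (fun e => w + e) '' E ∪ {w}) ∩ ((W : Set V) \ {0})) := by
    intro z hz hz0
    exact ⟨Or.inl (Or.inl ⟨hz.2, hz0⟩), hz.1, hz0⟩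
  have hxU : x ∈ W ⊓ G₀ := (f 0).2
  have hyU : y ∈ W ⊓ G₀ := (f 1).2
  have hxyU : x + y ∈ W ⊓ G₀ := add_mem hxU hyU
  have hsub : (insert (x + y) {x, y} : Set V) ⊆
      ((((G₀ : Set V) \ {0}) ∪ (fun e => w + e) '' E ∪ {w}) ∩ ((W : Set V) \ {0})) := by
    intro z hz
    rcases hz with rfl | rfl | rfl
    · exact hmemU _ hxyU hxy0
    · exact hmemU _ hxU hx0
    · exact hmemU _ hyU hy0
  have hli' : LinearIndependent (ZMod 2) ((↑) : ↥(insert (x + y) ({x, y} : Set V)) → V) :=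
    LinearIndepOn.mono (linearIndependent_subtype_iff.mp hli) hsub
  have hne : x + y ∉ ({x, y} : Set V) := by
    rintro (hc | hc)
    · apply hy0
      have : x + (y + y) = x + y + y := by rw [← add_assoc]
      rw [hc] at this
      simpa [hyy] using this.symm
    · apply hx0
      have : x + (y + y) = x + y + y := by rw [← add_assoc]
      have h2 : x + y + y = y + y := by rw [hc]
      rw [h2] at this
      simpa [hyy] using this
  rw [linearIndependent_subtype_iff, linearIndepOn_id_insert hne] at hli'
  exact hli'.2 (Submodule.add_mem _ (Submodule.subset_span (by simp))
    (Submodule.subset_span (by simp)))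
end
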